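/- The map Ξ(a₃,n₃;a₄,n₄) from ℝ^{d+1} × ℝ^{d+1} to ℝ^{d+1} × ℝ^{d+1} defined (for fixed parameters a₁,n₁,m₁,t₁,a₂,n₂,m₂,t₂) by Ξ = (t₁ − sinh(2a₄−2a₂)e^{2a₁}, m₁ − (1/2)sinh(2a₄−2a₂)e^{2a₁}n₃ − cosh(a₃−a₁)cosh(a₄−a₂)e^{a₁+a₂}(n₄−n₂); t₂ + sinh(2a₃−2a₁)e^{2a₂}, m₂ + (1/2)sinh(2a₃−2a₁)e^{2a₂}n₄ + cosh(a₃−a₁)cosh(a₄−a₂)e^{a₁+a₂}(n₃−n₁)) has Jacobian determinant (up to sign) equal to 4 e^{(2d+2)(a₁+a₂)} (cosh(a₃−a₁)cosh(a₄−a₂)cosh(a₃−a₁−a₄+a₂))^d cosh(2a₃−2a₁)cosh(2a₄−2a₂). -/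

import Mathlib

/-!
Order the coordinates as `(a₃, a₄ | n₃, n₄)`. The scalar outputs of `Ξ` do not depend on
`n₃, n₄`, so the Jacobian is block lower triangular. Its scalar block is antidiagonal, with
entries `-2 cosh(2a₄ - 2a₂) e^{2a₁}` and `2 cosh(2a₃ - 2a₁) e^{2a₂}`. Since `Ξ` is affine in
`(n₃, n₄)`, its vector block is `[[-s₄ I, -C I], [C I, s₃ I]]`, where
`C = cosh(a₃ - a₁) cosh(a₄ - a₂) e^{a₁+a₂}` and `s₃ = ½ sinh(2a₃ - 2a₁) e^{2a₂}`,
`s₄ = ½ sinh(2a₄ - 2a₂) e^{2a₁}`. That block has determinant `(C² - s₃ s₄)^d`, and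
`cosh x cosh y cosh (x - y) = cosh² x cosh² y - ¼ sinh 2x sinh 2y` turns `C² - s₃ s₄` into
`e^{2(a₁+a₂)} cosh(a₃ - a₁) cosh(a₄ - a₂) cosh(a₃ - a₁ - a₄ + a₂)`.
-/

open Real
noncomputable section

/-- The map Ξ : Q × Q → P × P (for fixed parameters), in coordinates ((a₃,n₃),(a₄,n₄)). -/
def Xi (d : ℕ) (a₁ a₂ t₁ t₂ : ℝ) (n₁ n₂ m₁ m₂ : Fin d → ℝ)
    (x : (ℝ × (Fin d → ℝ)) × (ℝ × (Fin d → ℝ))) : (ℝ × (Fin d → ℝ)) × (ℝ × (Fin d → ℝ)) :=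
  ((t₁ - Real.sinh (2 * x.2.1 - 2 * a₂) * Real.exp (2 * a₁),
    fun i => m₁ i - (1/2) * Real.sinh (2 * x.2.1 - 2 * a₂) * Real.exp (2 * a₁) * x.1.2 i
      - Real.cosh (x.1.1 - a₁) * Real.cosh (x.2.1 - a₂) * Real.exp (a₁ + a₂) *
        (x.2.2 i - n₂ i)),
   (t₂ + Real.sinh (2 * x.1.1 - 2 * a₁) * Real.exp (2 * a₂),
    fun i => m₂ i + (1/2) * Real.sinh (2 * x.1.1 - 2 * a₁) * Real.exp (2 * a₂) * x.2.2 i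
      + Real.cosh (x.1.1 - a₁) * Real.cosh (x.2.1 - a₂) * Real.exp (a₁ + a₂) *
        (x.1.2 i - n₁ i)))

open Matrix Kronecker in
theorem Matrix.det_fromBlocks_smul_one {R n : Type*} [CommRing R] [Fintype n] [DecidableEq n]
    (a b c d : R) :
    (fromBlocks (a • 1) (b • 1) (c • 1) (d • 1) : Matrix (n ⊕ n) (n ⊕ n) R).det
      = (a * d - b * c) ^ Fintype.card n := by
  let e : n ⊕ n ≃ Fin 2 × n :=
    (Equiv.boolProdEquivSum n).symm.trans (finTwoEquiv.symm.prodCongr (Equiv.refl n))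
  have h : (fromBlocks (a • 1) (b • 1) (c • 1) (d • 1) : Matrix (n ⊕ n) (n ⊕ n) R)
      = (!![a, b; c, d] ⊗ₖ (1 : Matrix n n R)).submatrix e e := by
    ext (i | i) (j | j) <;> simp [e, finTwoEquiv, one_apply]
  rw [h, det_submatrix_equiv_self, det_kronecker, det_fin_two_of, det_one, one_pow, mul_one]

namespace LinearMap

variable {R : Type*} [CommRing R]

theorem det_eq_det_mul_det_of_fst_map_inr_eq_zero {M N : Type*}
    [AddCommGroup M] [Module R M] [Module.Free R M] [Module.Finite R M]
    [AddCommGroup N] [Module R N] [Module.Free R N] [Module.Finite R N]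
    (f : Module.End R (M × N)) (hf : ∀ y, (f (0, y)).1 = 0) :
    f.det = (fst R M N ∘ₗ f ∘ₗ inl R M N).det * (snd R M N ∘ₗ f ∘ₗ inr R M N).det := by
  classical
  let b := Module.Free.chooseBasis R M
  let b' := Module.Free.chooseBasis R N
  rw [← det_toMatrix (b.prod b'), ← det_toMatrix b, ← det_toMatrix b',
    ← Matrix.det_fromBlocks_zero₁₂ _ (Matrix.of fun i j => b'.repr (f (b j, 0)).2 i)]
  congr 1
  ext (i | i) (j | j) <;> simp [toMatrix_apply, hf]

variable [Nontrivial R] {V : Type*} [AddCommGroup V] [Module R V] [Module.Free R V]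
  [Module.Finite R V]

theorem det_eq_of_apply_prod (f : Module.End R (V × V)) (a b c d : R)
    (hf : ∀ u v, f (u, v) = (a • u + b • v, c • u + d • v)) :
    f.det = (a * d - b * c) ^ Module.finrank R V := by
  classical
  let b₀ := Module.Free.chooseBasis R V
  rw [← det_toMatrix (b₀.prod b₀), Module.finrank_eq_card_chooseBasisIndex,
    ← Matrix.det_fromBlocks_smul_one]
  congr 1
  ext (i | i) (j | j) <;>
    simp [toMatrix_apply, hf, b₀, Matrix.one_apply, Finsupp.single_apply, eq_comm]

theorem det_eq_of_apply_prod_prod (f : Module.End R ((R × V) × (R × V)))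
    (a b c d a' b' c' d' : R)
    (hV : ∀ u v, f ((0, u), (0, v)) = ((0, a' • u + b' • v), (0, c' • u + d' • v)))
    (hR : ∀ x y, ((f ((x, 0), (y, 0))).1.1, (f ((x, 0), (y, 0))).2.1)
      = (a * x + b * y, c * x + d * y)) :
    f.det = (a * d - b * c) * (a' * d' - b' * c') ^ Module.finrank R V := by
  let e := LinearEquiv.prodProdProdComm R R V R V
  rw [← det_conj f e, det_eq_det_mul_det_of_fst_map_inr_eq_zero]
  · rw [det_eq_of_apply_prod _ a b c d, det_eq_of_apply_prod _ a' b' c' d',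
      Module.finrank_self, pow_one]
    · intro u v
      simp [e, hV]
    · intro x y
      simpa [e, mul_comm] using hR x y
  · intro z
    simp [e, hV]

end LinearMap

theorem Real.cosh_mul_cosh_mul_cosh_sub (x y : ℝ) :
    cosh x * cosh y * cosh (x - y) = (cosh x * cosh y) ^ 2 - sinh (2 * x) * sinh (2 * y) / 4 := by
  rw [cosh_sub, sinh_two_mul, sinh_two_mul]
  ring

section

variable (d : ℕ) (a₁ a₂ t₁ t₂ : ℝ) (n₁ n₂ m₁ m₂ : Fin d → ℝ)
  (p w : (ℝ × (Fin d → ℝ)) × (ℝ × (Fin d → ℝ)))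

theorem differentiable_Xi : Differentiable ℝ (Xi d a₁ a₂ t₁ t₂ n₁ n₂ m₁ m₂) := by
  unfold Xi
  fun_prop

theorem fderiv_Xi_apply_vertical (u v : Fin d → ℝ) :
    fderiv ℝ (Xi d a₁ a₂ t₁ t₂ n₁ n₂ m₁ m₂) p ((0, u), (0, v))
      = ((0, (-(1 / 2 * sinh (2 * p.2.1 - 2 * a₂) * exp (2 * a₁))) • u
            + (-(cosh (p.1.1 - a₁) * cosh (p.2.1 - a₂) * exp (a₁ + a₂))) • v),
         (0, (cosh (p.1.1 - a₁) * cosh (p.2.1 - a₂) * exp (a₁ + a₂)) • u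
            + (1 / 2 * sinh (2 * p.1.1 - 2 * a₁) * exp (2 * a₂)) • v)) := by
  rw [← (differentiable_Xi d a₁ a₂ t₁ t₂ n₁ n₂ m₁ m₂ p).lineDeriv_eq_fderiv, lineDeriv]
  -- `Ξ` is affine along vertical lines
  refine HasDerivAt.deriv <|
    ((((hasDerivAt_id (0 : ℝ)).smul_const _).const_add
      (Xi d a₁ a₂ t₁ t₂ n₁ n₂ m₁ m₂ p)).congr_deriv (one_smul ℝ _)).congr_of_eventuallyEq
      (Filter.Eventually.of_forall fun t => ?_)
  ext i <;>
    simp only [Xi, Prod.smul_mk, smul_eq_mul, mul_zero, Prod.snd_add, Prod.fst_add, add_zero,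
      one_div, Pi.add_apply, Pi.smul_apply, Pi.neg_apply, id_eq, neg_smul, smul_add, smul_neg,
      Prod.mk_add_mk] <;>
    ring

theorem fderiv_Xi_apply_fst_fst :
    (fderiv ℝ (Xi d a₁ a₂ t₁ t₂ n₁ n₂ m₁ m₂) p w).1.1
      = -(2 * cosh (2 * p.2.1 - 2 * a₂) * exp (2 * a₁)) * w.2.1 := by
  have hXi := (differentiable_Xi d a₁ a₂ t₁ t₂ n₁ n₂ m₁ m₂ p).hasFDerivAt.fst.fst
  have h : HasFDerivAt (fun x => t₁ - sinh (2 * x.2.1 - 2 * a₂) * exp (2 * a₁)) _ p :=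
    (((hasFDerivAt_snd.fst.const_mul 2).sub_const (2 * a₂)).sinh.mul_const
      (exp (2 * a₁))).const_sub t₁
  simpa [mul_comm, mul_left_comm, mul_assoc] using congrArg (· w) (hXi.unique h)

theorem fderiv_Xi_apply_snd_fst :
    (fderiv ℝ (Xi d a₁ a₂ t₁ t₂ n₁ n₂ m₁ m₂) p w).2.1
      = 2 * cosh (2 * p.1.1 - 2 * a₁) * exp (2 * a₂) * w.1.1 := by
  have hXi := (differentiable_Xi d a₁ a₂ t₁ t₂ n₁ n₂ m₁ m₂ p).hasFDerivAt.snd.fst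
  have h : HasFDerivAt (fun x => t₂ + sinh (2 * x.1.1 - 2 * a₁) * exp (2 * a₂)) _ p :=
    (((hasFDerivAt_fst.fst.const_mul 2).sub_const (2 * a₁)).sinh.mul_const
      (exp (2 * a₂))).const_add t₂
  simpa [mul_comm, mul_left_comm, mul_assoc] using congrArg (· w) (hXi.unique h)

theorem det_fderiv_Xi :
    (fderiv ℝ (Xi d a₁ a₂ t₁ t₂ n₁ n₂ m₁ m₂) p).det
      = 2 * cosh (2 * p.2.1 - 2 * a₂) * exp (2 * a₁)
          * (2 * cosh (2 * p.1.1 - 2 * a₁) * exp (2 * a₂))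
        * ((cosh (p.1.1 - a₁) * cosh (p.2.1 - a₂) * exp (a₁ + a₂)) ^ 2
          - sinh (2 * p.1.1 - 2 * a₁) * sinh (2 * p.2.1 - 2 * a₂)
            * (exp (2 * a₁) * exp (2 * a₂)) / 4) ^ d := by
  rw [ContinuousLinearMap.det, LinearMap.det_eq_of_apply_prod_prod _ 0
      (-(2 * cosh (2 * p.2.1 - 2 * a₂) * exp (2 * a₁)))
      (2 * cosh (2 * p.1.1 - 2 * a₁) * exp (2 * a₂)) 0 _ _ _ _
      (fderiv_Xi_apply_vertical d a₁ a₂ t₁ t₂ n₁ n₂ m₁ m₂ p)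
      fun x y => by simp [fderiv_Xi_apply_fst_fst, fderiv_Xi_apply_snd_fst],
    Module.finrank_fin_fun]
  ring

end

theorem Xi_jacobian (d : ℕ) (a₁ a₂ t₁ t₂ : ℝ) (n₁ n₂ m₁ m₂ : Fin d → ℝ)
    (a₃ a₄ : ℝ) (n₃ n₄ : Fin d → ℝ) :
    |(fderiv ℝ (Xi d a₁ a₂ t₁ t₂ n₁ n₂ m₁ m₂) ((a₃, n₃), (a₄, n₄))).det|
      = 4 * Real.exp ((2 * (d : ℝ) + 2) * (a₁ + a₂)) *
          (Real.cosh (a₃ - a₁) * Real.cosh (a₄ - a₂) * Real.cosh (a₃ - a₁ - a₄ + a₂)) ^ d *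
          Real.cosh (2 * a₃ - 2 * a₁) * Real.cosh (2 * a₄ - 2 * a₂) := by
  have hexp_mul : exp (2 * a₁) * exp (2 * a₂) = exp (a₁ + a₂) ^ 2 := by
    rw [← exp_add, ← exp_nat_mul]
    ring_nf
  have hminor : (cosh (a₃ - a₁) * cosh (a₄ - a₂) * exp (a₁ + a₂)) ^ 2
      - sinh (2 * a₃ - 2 * a₁) * sinh (2 * a₄ - 2 * a₂) * (exp (2 * a₁) * exp (2 * a₂)) / 4
      = exp (a₁ + a₂) ^ 2 * (cosh (a₃ - a₁) * cosh (a₄ - a₂) * cosh (a₃ - a₁ - a₄ + a₂)) := by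
    rw [show a₃ - a₁ - a₄ + a₂ = (a₃ - a₁) - (a₄ - a₂) by ring, cosh_mul_cosh_mul_cosh_sub,
      mul_sub 2 a₃, mul_sub 2 a₄, hexp_mul]
    ring
  have hexp_pow : exp ((2 * (d : ℝ) + 2) * (a₁ + a₂))
      = (exp (a₁ + a₂) ^ 2) ^ d * (exp (2 * a₁) * exp (2 * a₂)) := by
    rw [hexp_mul, ← pow_succ, ← exp_nat_mul, ← exp_nat_mul]
    push_cast
    ring_nf
  rw [det_fderiv_Xi, hminor, hexp_pow, abs_of_pos (by positivity)]
  ring
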